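/- Let ℓ : ℝ^d → ℝ be L-smooth, e ∈ ℝ^d, and suppose candidates v, v' satisfy ‖v − e‖ ≤ R and ‖v' − e‖ ≤ R. If the linear scores satisfy ⟨v − e, ∇ℓ(e)⟩ ≤ ⟨v' − e, ∇ℓ(e)⟩, then ℓ(v) ≤ ℓ(v') + L·R². -/

import Mathlib

/-- `p` is a probability distribution on the finite type `Ω`. -/
def IsProbDist {Ω : Type*} [Fintype Ω] (p : Ω → ℝ) : Prop :=
  (∀ b, 0 ≤ p b) ∧ ∑ b, p b = 1

/-- Total variation distance between two distributions on a finite type. -/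
noncomputable def tv {Ω : Type*} [Fintype Ω] (p q : Ω → ℝ) : ℝ :=
  (1 / 2) * ∑ b, |p b - q b|

/-- Mass that `p` assigns to the finite set `B`. -/
def probOf {Ω : Type*} (p : Ω → ℝ) (B : Finset Ω) : ℝ := ∑ b ∈ B, p b

/-- Uniform distribution on a finite nonempty subset `R`, embedded in `Ω`. -/
noncomputable def uniformOn {Ω : Type*} [DecidableEq Ω] (R : Finset Ω) : Ω → ℝ :=
  fun b => if b ∈ R then 1 / (R.card : ℝ) else 0

/-- Kullback–Leibler divergence `D(q ‖ p)` on a finite type, valued in `EReal`,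
with the conventions `0 · log 0 = 0` and `q · log (q / 0) = +∞` for `q > 0`. -/
noncomputable def klE {Ω : Type*} [Fintype Ω] (q p : Ω → ℝ) : EReal :=
  ∑ b, if q b = 0 then (0 : EReal) else if p b = 0 then (⊤ : EReal)
    else ((q b * Real.log (q b / p b) : ℝ) : EReal)

/-! Along a segment from `a`, an `L`-Lipschitz gradient makes the derivative of `ℓ` drift from
its value at `a` by at most `L t ‖b - a‖²`, so the first-order Taylor remainder at `b` is at most
`(L/2) ‖b - a‖²` in absolute value. Bounding the remainder above at `v` and below at `v'`, the
score comparison leaves two half-remainders, together at most `L R²`. -/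

open Set

theorem norm_sub_sub_deriv_le_of_norm_deriv_sub_le {E : Type*} [NormedAddCommGroup E]
    [NormedSpace ℝ E] {f f' : ℝ → E} {C : ℝ} (hf : ∀ t, HasDerivAt f (f' t) t)
    (hf' : ∀ t ∈ Ico (0 : ℝ) 1, ‖f' t - f' 0‖ ≤ C * t) :
    ‖f 1 - f 0 - f' 0‖ ≤ C / 2 := by
  set g : ℝ → E := fun t => f t - f 0 - t • f' 0
  have hg : ∀ t, HasDerivAt g (f' t - f' 0) t := fun t =>
    (((hf t).sub_const (f 0)).sub ((hasDerivAt_id' t).smul_const (f' 0))).congr_deriv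
      (by rw [one_smul])
  have hB : ∀ t, HasDerivAt (fun t : ℝ => C / 2 * t ^ 2) (C * t) t := fun t =>
    ((hasDerivAt_pow 2 t).const_mul (C / 2)).congr_deriv (by ring)
  have key := image_norm_le_of_norm_deriv_right_le_deriv_boundary
    (f := g) (B := fun t => C / 2 * t ^ 2) (fun t _ => (hg t).continuousAt.continuousWithinAt)
    (fun t _ => (hg t).hasDerivWithinAt) (by simp [g]) hB hf' (right_mem_Icc.2 zero_le_one)
  simpa [g] using key

theorem abs_sub_sub_inner_gradient_le {E : Type*} [NormedAddCommGroup E] [InnerProductSpace ℝ E]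
    [CompleteSpace E] {ℓ : E → ℝ} {L : ℝ} (hdiff : Differentiable ℝ ℓ)
    (hlip : ∀ a b, ‖gradient ℓ a - gradient ℓ b‖ ≤ L * ‖a - b‖) (a b : E) :
    |ℓ b - ℓ a - inner ℝ (b - a) (gradient ℓ a)| ≤ L / 2 * ‖b - a‖ ^ 2 := by
  set c : ℝ → E := fun t => a + t • (b - a)
  have hc : ∀ t, HasDerivAt c (b - a) t := fun t =>
    (((hasDerivAt_id' t).smul_const (b - a)).const_add a).congr_deriv (one_smul ℝ _)
  have hf : ∀ t, HasDerivAt (ℓ ∘ c) (inner ℝ (b - a) (gradient ℓ (c t))) t := fun t => by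
    simpa [real_inner_comm] using
      (hdiff (c t)).hasGradientAt.hasFDerivAt.comp_hasDerivAt t (hc t)
  have hf' : ∀ t ∈ Ico (0 : ℝ) 1, ‖inner ℝ (b - a) (gradient ℓ (c t))
      - inner ℝ (b - a) (gradient ℓ (c 0))‖ ≤ L * ‖b - a‖ ^ 2 * t := by
    intro t ht
    rw [← inner_sub_right, Real.norm_eq_abs]
    calc _ ≤ ‖b - a‖ * ‖gradient ℓ (c t) - gradient ℓ (c 0)‖ := abs_real_inner_le_norm _ _
      _ ≤ ‖b - a‖ * (L * ‖c t - c 0‖) := by gcongr; exact hlip _ _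
      _ = L * ‖b - a‖ ^ 2 * t := by
        simp only [c, zero_smul, add_zero, add_sub_cancel_left, norm_smul, Real.norm_eq_abs,
          abs_of_nonneg ht.1]
        ring
  have key := norm_sub_sub_deriv_le_of_norm_deriv_sub_le hf hf'
  simp only [c, Function.comp_apply, one_smul, zero_smul, add_zero, add_sub_cancel,
    Real.norm_eq_abs] at key
  linarith

/-- single-pair screening inequality — a candidate with a better
first-order score exceeds the other candidate's loss by at most `L·R²`. -/
theorem stmt14 {d : ℕ} (L R : ℝ) (hL : 0 ≤ L)
    (ℓ : EuclideanSpace ℝ (Fin d) → ℝ) (hdiff : Differentiable ℝ ℓ)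
    (hlip : ∀ a b, ‖gradient ℓ a - gradient ℓ b‖ ≤ L * ‖a - b‖)
    (e v v' : EuclideanSpace ℝ (Fin d))
    (hv : ‖v - e‖ ≤ R) (hv' : ‖v' - e‖ ≤ R)
    (hscore : (inner ℝ (v - e) (gradient ℓ e) : ℝ) ≤ (inner ℝ (v' - e) (gradient ℓ e) : ℝ)) :
    ℓ v ≤ ℓ v' + L * R ^ 2 := by
  have hv_upper := (abs_le.1 (abs_sub_sub_inner_gradient_le hdiff hlip e v)).2
  have hv'_lower := (abs_le.1 (abs_sub_sub_inner_gradient_le hdiff hlip e v')).1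
  have hv_sq : ‖v - e‖ ^ 2 ≤ R ^ 2 := pow_le_pow_left₀ (norm_nonneg _) hv 2
  have hv'_sq : ‖v' - e‖ ^ 2 ≤ R ^ 2 := pow_le_pow_left₀ (norm_nonneg _) hv' 2
  calc ℓ v ≤ ℓ e + inner ℝ (v - e) (gradient ℓ e) + L / 2 * ‖v - e‖ ^ 2 := by linarith
    _ ≤ ℓ e + inner ℝ (v' - e) (gradient ℓ e) + L / 2 * R ^ 2 := by gcongr
    _ ≤ ℓ v' + L / 2 * ‖v' - e‖ ^ 2 + L / 2 * R ^ 2 := by linarith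
    _ ≤ ℓ v' + L / 2 * R ^ 2 + L / 2 * R ^ 2 := by gcongr
    _ = ℓ v' + L * R ^ 2 := by ring
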